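/- arXiv:2306.07574 — 3 statements merged into one kernel-verified Lean document; each statement's English description precedes it below -/
import Mathlib

section
/- For all integers n ≥ 1 and k ≥ 1, we have f(n,k) ≥ ⌈H_n·k⌉, where H_n = ∑_{i=1}^n 1/i. -/
open scoped Classical in
/-- `coverNumber n k` is the minimum size of a multiset `C` of coefficient vectors
`c ∈ ℝ^n` (each representing the hyperplane `{x : ∑ i, c i * x i = 1}`, which avoids
the origin) such that every nonzero point `x ∈ {0,1}^n` lies on at least `k` of the
hyperplanes, counted with multiplicity. -/
noncomputable def coverNumber (n k : ℕ) : ℕ :=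
  sInf {m | ∃ C : Multiset (Fin n → ℝ),
    Multiset.card C = m ∧
    ∀ x : Fin n → ℝ, (∀ i, x i = 0 ∨ x i = 1) → x ≠ 0 →
      k ≤ Multiset.card (C.filter (fun c => ∑ i, c i * x i = 1))}

/-- The `n`-th harmonic number, as a real number. -/
noncomputable def harmonicR (n : ℕ) : ℝ := ∑ i ∈ Finset.range n, 1 / ((i : ℝ) + 1)

/-!
Double count against the weights `1 / (i + 1)` on the prefix sets `σ '' [0, i]` of permutations
`σ` of `Fin n` (a feasible point of the dual LP). Each prefix set is a nonzero cube point, so it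
lies on at least `k` hyperplanes of the cover, and the total weight is `n! H_n k`. A single
hyperplane `c` contains `σ '' [0, i]` for at most `i + 1` times as many `σ` as there are `σ` for
which `i` is the first index where the prefix sums of `c ∘ σ` reach `1`: rotating the first
`i + 1` entries of `σ` keeps the prefix set, and by the cycle lemma one of the rotations has no
shorter prefix summing to `1`. Each `σ` has at most one such first index, so each hyperplane
carries weight at most `n!`.
-/

open Finset Equiv
open Fin.NatCast
open scoped Nat

theorem Fin.sum_Iic_eq_sum_range {M : Type*} [AddCommMonoid M] {m : ℕ} (g : Fin (m + 1) → M)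
    (j : Fin (m + 1)) :
    ∑ l ∈ Iic j, g l = ∑ t ∈ range (j + 1), g t := by
  rw [Nat.range_succ_eq_Iic, ← Fin.map_valEmbedding_Iic, sum_map]
  simp

theorem Finset.sum_card_multiset_filter {ι β : Type*} (s : Finset ι) (C : Multiset β)
    (p : β → ι → Prop) [∀ c i, Decidable (p c i)] :
    ∑ i ∈ s, Multiset.card (C.filter (p · i)) = (C.map fun c => #{i ∈ s | p c i}).sum := by
  induction C using Multiset.induction_on with
  | empty => simp
  | cons c C ih =>
    simp only [Multiset.filter_cons, Multiset.card_add, sum_add_distrib, ih, Multiset.map_cons,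
      Multiset.sum_cons, card_filter]
    congr 1
    exact sum_congr rfl fun i _ => by split_ifs <;> rfl

section Rotation

variable {α : Type*} [AddCommGroup α] [LinearOrder α] [IsOrderedAddMonoid α]

theorem Function.Periodic.exists_sum_range_add_lt {E : ℕ → α} {p : ℕ}
    (hE : Function.Periodic E p) (hpos : 0 < ∑ l ∈ range p, E l) :
    ∃ r < p, ∀ t < p, ∑ l ∈ range t, E (r + l) < ∑ l ∈ range p, E l := by
  set F : ℕ → α := fun t => ∑ l ∈ range t, E l with hF
  have hp : p ≠ 0 := by rintro rfl; simp at hpos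
  have hFp : ∀ s, F (p + s) = F p + F s := fun s => by
    simp only [hF]
    rw [sum_range_add]
    exact congrArg _ (sum_congr rfl fun x _ => by rw [add_comm, hE])
  have hmax : ∃ r, r < p ∧ ∀ s < p, F s ≤ F r := by
    obtain ⟨r, hr, h⟩ := exists_max_image (range p) F (nonempty_range_iff.2 hp)
    exact ⟨r, mem_range.1 hr, fun s hs => h s (mem_range.2 hs)⟩
  obtain ⟨hrp, hrmax⟩ := Nat.find_spec hmax
  -- start at the first maximiser of the partial sums
  refine ⟨Nat.find hmax, hrp, fun t ht => ?_⟩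
  set r := Nat.find hmax
  rw [← sum_range_add_sub_sum_range]
  change F (r + t) - F r < F p
  rcases lt_or_ge (r + t) p with h | h
  · exact (sub_nonpos.2 (hrmax _ h)).trans_lt hpos
  · obtain ⟨s, hs⟩ := Nat.exists_eq_add_of_le h
    have hsr : F s < F r := by
      have := Nat.find_min hmax (show s < r by omega)
      push Not at this
      obtain ⟨s', hs', hlt⟩ := this (by omega)
      exact hlt.trans_le (hrmax s' hs')
    rw [hs, hFp, add_sub_assoc]
    exact add_lt_of_neg_right _ (sub_neg.2 hsr)

theorem Fin.exists_sum_Iic_add_lt {m : ℕ} (e : Fin (m + 1) → α) (he : 0 < ∑ l, e l) :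
    ∃ r, ∀ j < Fin.last m, ∑ l ∈ Iic j, e (l + r) < ∑ l, e l := by
  have hsum : ∑ l ∈ range (m + 1), e l = ∑ l, e l := by
    simpa using (Fin.sum_univ_eq_sum_range (fun l => e l) (m + 1)).symm
  have hper : Function.Periodic (fun t : ℕ => e t) (m + 1) := fun t => by simp
  obtain ⟨r, -, hr⟩ := hper.exists_sum_range_add_lt (hsum ▸ he)
  refine ⟨r, fun j hj => ?_⟩
  have := hr (j + 1) (by simpa [Fin.lt_def] using hj)
  simpa [Fin.sum_Iic_eq_sum_range, hsum, add_comm] using this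

end Rotation

section FirstHit

variable {M : Type*} [AddCommMonoid M] {n : ℕ}

def IsFirstHit (f : Fin n → M) (a : M) (i : Fin n) : Prop :=
  ∑ l ∈ Iic i, f l = a ∧ ∀ j < i, ∑ l ∈ Iic j, f l ≠ a

theorem IsFirstHit.unique {f : Fin n → M} {a : M} {i j : Fin n} (hi : IsFirstHit f a i)
    (hj : IsFirstHit f a j) : i = j := by
  rcases lt_trichotomy i j with h | h | h
  · exact absurd hi.1 (hj.2 i h)
  · exact h
  · exact absurd hj.1 (hi.2 j h)

open scoped Classical in
theorem sum_card_isFirstHit_le_factorial (c : Fin n → M) (a : M) :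
    ∑ i, #{σ : Perm (Fin n) | IsFirstHit (c ∘ σ) a i} ≤ n ! :=
  calc ∑ i, #{σ : Perm (Fin n) | IsFirstHit (c ∘ σ) a i}
      = ∑ σ : Perm (Fin n), #{i | IsFirstHit (c ∘ σ) a i} := by
        simp only [card_filter]
        exact sum_comm
    _ ≤ ∑ _σ : Perm (Fin n), 1 := sum_le_sum fun σ _ => card_le_one.2 fun i hi j hj =>
        (mem_filter.1 hi).2.unique (mem_filter.1 hj).2
    _ = n ! := by simp [Fintype.card_perm]

end FirstHit

section Cyclic

variable {α : Type*} [AddCommGroup α] [LinearOrder α] [IsOrderedAddMonoid α] {n : ℕ}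

theorem exists_isFirstHit_comp_viaEmbedding_addRight {f : Fin n → α} {a : α} (ha : 0 < a)
    {i : Fin n} (hi : ∑ l ∈ Iic i, f l = a) :
    ∃ r : Fin (i + 1),
      IsFirstHit (f ∘ (Equiv.addRight r).viaEmbedding (Fin.castLEEmb i.isLt)) a i := by
  set e : Fin (i + 1) → α := fun l => f (Fin.castLE i.isLt l)
  have hIic : Iic (Fin.last i) = univ := by ext; simp [Fin.le_last]
  have he : ∑ l, e l = a :=
    calc ∑ l, e l = ∑ l ∈ Iic (Fin.last i), e l := by rw [hIic]
      _ = a := (Fin.sum_Iic_castLE i.isLt f _).symm.trans hi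
  obtain ⟨r, hr⟩ := Fin.exists_sum_Iic_add_lt e (he ▸ ha)
  set π := (Equiv.addRight r).viaEmbedding (Fin.castLEEmb i.isLt)
  have hπ (j : Fin (i + 1)) :
      ∑ l ∈ Iic (j.castLE i.isLt), (f ∘ π) l = ∑ l ∈ Iic j, e (l + r) := by
    rw [Fin.sum_Iic_castLE]
    exact sum_congr rfl fun l _ => congrArg f (Equiv.Perm.viaEmbedding_apply _ _ l)
  refine ⟨r, ?_, fun j hj => ?_⟩
  · refine (hπ (Fin.last i)).trans ?_
    rw [hIic, ← he]
    exact Equiv.sum_comp (Equiv.addRight r) e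
  · have hj' : j = Fin.castLE i.isLt ⟨j, by omega⟩ := rfl
    rw [hj', hπ]
    exact he ▸ (hr _ (Fin.lt_def.2 hj)).ne

open scoped Classical in
theorem card_sum_Iic_eq_le_mul_card_isFirstHit {a : α} (ha : 0 < a) (c : Fin n → α) (i : Fin n) :
    #{σ : Perm (Fin n) | ∑ l ∈ Iic i, c (σ l) = a} ≤
      (i + 1) * #{σ : Perm (Fin n) | IsFirstHit (c ∘ σ) a i} := by
  set π : Fin (i + 1) → Perm (Fin n) :=
    fun r => (Equiv.addRight r).viaEmbedding (Fin.castLEEmb i.isLt)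
  calc #{σ : Perm (Fin n) | ∑ l ∈ Iic i, c (σ l) = a}
      ≤ #(univ.biUnion fun r => {σ : Perm (Fin n) | IsFirstHit (c ∘ ⇑(σ * π r)) a i}) :=
        card_le_card fun σ hσ => by
          obtain ⟨r, hr⟩ := exists_isFirstHit_comp_viaEmbedding_addRight ha (mem_filter.1 hσ).2
          exact mem_biUnion.2 ⟨r, mem_univ _, mem_filter.2 ⟨mem_univ _, hr⟩⟩
    _ ≤ ∑ r, #{σ : Perm (Fin n) | IsFirstHit (c ∘ ⇑(σ * π r)) a i} := card_biUnion_le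
    _ = ∑ _r : Fin (i + 1), #{σ : Perm (Fin n) | IsFirstHit (c ∘ σ) a i} :=
        sum_congr rfl fun r _ => card_equiv (Equiv.mulRight (π r)) fun σ => by
          simp only [mem_filter, mem_univ, true_and]
          rfl
    _ = (i + 1) * #{σ : Perm (Fin n) | IsFirstHit (c ∘ σ) a i} := by simp

theorem sum_card_sum_Iic_eq_div_le_factorial {a : α} (ha : 0 < a) (c : Fin n → α) :
    ∑ i : Fin n, (#{σ : Perm (Fin n) | ∑ l ∈ Iic i, c (σ l) = a} : ℝ) / (i + 1) ≤ n ! := by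
  classical
  calc ∑ i : Fin n, (#{σ : Perm (Fin n) | ∑ l ∈ Iic i, c (σ l) = a} : ℝ) / (i + 1)
      ≤ ∑ i : Fin n, (#{σ : Perm (Fin n) | IsFirstHit (c ∘ σ) a i} : ℝ) :=
        sum_le_sum fun i _ => by
          rw [div_le_iff₀ (by positivity), mul_comm]
          exact_mod_cast card_sum_Iic_eq_le_mul_card_isFirstHit ha c i
    _ ≤ n ! := by exact_mod_cast sum_card_isFirstHit_le_factorial c a

end Cyclic

def IsAlmostCover (n k : ℕ) (C : Multiset (Fin n → ℝ)) : Prop :=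
  ∀ x : Fin n → ℝ, (∀ i, x i = 0 ∨ x i = 1) → x ≠ 0 →
    k ≤ Multiset.card (C.filter (fun c => ∑ i, c i * x i = 1))

namespace IsAlmostCover

variable {n k : ℕ} {C : Multiset (Fin n → ℝ)}

theorem le_card_filter_sum_eq_one (hC : IsAlmostCover n k C) {S : Finset (Fin n)}
    (hS : S.Nonempty) : k ≤ Multiset.card (C.filter fun c => ∑ j ∈ S, c j = 1) := by
  obtain ⟨j₀, hj₀⟩ := hS
  have h := hC (fun j => if j ∈ S then 1 else 0) (fun j => by split_ifs <;> simp)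
    (fun h => by simpa [hj₀] using congrFun h j₀)
  simpa [mul_ite, sum_ite_mem] using h

theorem harmonicR_mul_le_card (hC : IsAlmostCover n k C) :
    harmonicR n * k ≤ Multiset.card C := by
  have hcover (σ : Perm (Fin n)) (i : Fin n) :
      (k : ℝ) ≤ Multiset.card (C.filter fun c => ∑ l ∈ Iic i, c (σ l) = 1) := by
    have := hC.le_card_filter_sum_eq_one (S := (Iic i).map σ.toEmbedding)
      ⟨σ i, mem_map_of_mem _ (mem_Iic.2 le_rfl)⟩
    simpa [sum_map] using this
  have hswap (i : Fin n) :
      ∑ σ : Perm (Fin n), (Multiset.card (C.filter fun c => ∑ l ∈ Iic i, c (σ l) = 1) : ℝ) =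
        (C.map fun c => (#{σ : Perm (Fin n) | ∑ l ∈ Iic i, c (σ l) = 1} : ℝ)).sum := by
    rw [← Nat.cast_sum, Finset.sum_card_multiset_filter, Nat.cast_multiset_sum, Multiset.map_map]
    rfl
  rw [← mul_le_mul_iff_of_pos_right (by positivity : (0 : ℝ) < (n ! : ℝ))]
  calc harmonicR n * k * n ! = ∑ i : Fin n, (∑ _σ : Perm (Fin n), (k : ℝ)) / (i + 1) := by
        rw [harmonicR, ← Fin.sum_univ_eq_sum_range (fun i => 1 / ((i : ℝ) + 1)), sum_mul, sum_mul]
        refine sum_congr rfl fun i _ => ?_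
        simp [Fintype.card_perm]
        ring
    _ ≤ ∑ i : Fin n, (∑ σ : Perm (Fin n),
          (Multiset.card (C.filter fun c => ∑ l ∈ Iic i, c (σ l) = 1) : ℝ)) / (i + 1) := by
        refine sum_le_sum fun i _ => ?_
        gcongr (?_ : ℝ) / _
        exact sum_le_sum fun σ _ => hcover σ i
    _ = (C.map fun c => ∑ i : Fin n,
          (#{σ : Perm (Fin n) | ∑ l ∈ Iic i, c (σ l) = 1} : ℝ) / (i + 1)).sum := by
        rw [Multiset.sum_map_sum]
        exact sum_congr rfl fun i _ => by rw [hswap, Multiset.sum_map_div]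
    _ ≤ (C.map fun _ => (n ! : ℝ)).sum :=
        Multiset.sum_map_le_sum_map _ _ fun c _ => sum_card_sum_Iic_eq_div_le_factorial one_pos c
    _ = Multiset.card C * n ! := by simp

end IsAlmostCover

theorem exists_isAlmostCover (n k : ℕ) : ∃ C, IsAlmostCover n k C := by
  refine ⟨k • (Multiset.Icc 1 n).map fun (j : ℕ) _ => (j : ℝ)⁻¹, fun x hx hx0 => ?_⟩
  set m := #{i | x i = 1}
  have hsum : ∑ i, x i = m := by
    rw [← sum_boole]
    exact sum_congr rfl fun i _ => by rcases hx i with h | h <;> simp [h]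
  have hm : 0 < m := by
    obtain ⟨i, hi⟩ := Function.ne_iff.1 hx0
    exact card_pos.2 ⟨i, mem_filter.2 ⟨mem_univ _, (hx i).resolve_left hi⟩⟩
  have hmn : m ≤ n := card_le_univ _ |>.trans_eq (Fintype.card_fin n)
  have hmem :
      (fun _ => (m : ℝ)⁻¹) ∈ (Multiset.Icc 1 n).map fun (j : ℕ) (_ : Fin n) => (j : ℝ)⁻¹ :=
    Multiset.mem_map.2 ⟨m, Multiset.mem_Icc.2 ⟨hm, hmn⟩, rfl⟩
  have hon : ∑ i, (m : ℝ)⁻¹ * x i = 1 := by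
    rw [← mul_sum, hsum]
    exact inv_mul_cancel₀ (by positivity)
  rw [Multiset.filter_nsmul, Multiset.card_nsmul]
  exact Nat.le_mul_of_pos_right k
    (Multiset.card_pos_iff_exists_mem.2 ⟨_, Multiset.mem_filter.2 ⟨hmem, hon⟩⟩)

theorem exists_isAlmostCover_card_eq_coverNumber (n k : ℕ) :
    ∃ C, Multiset.card C = coverNumber n k ∧ IsAlmostCover n k C := by
  obtain ⟨C, hC⟩ := exists_isAlmostCover n k
  have hne : {m | ∃ C, Multiset.card C = m ∧ IsAlmostCover n k C}.Nonempty := ⟨_, C, rfl, hC⟩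
  exact Nat.sInf_mem hne

theorem lp_lower_bound_general (n k : ℕ) :
    (⌈harmonicR n * (k : ℝ)⌉ : ℤ) ≤ (coverNumber n k : ℤ) := by
  obtain ⟨C, hcard, hC⟩ := exists_isAlmostCover_card_eq_coverNumber n k
  rw [Int.ceil_le, ← hcard]
  exact_mod_cast hC.harmonicR_mul_le_card

theorem lp_lower_bound (n k : ℕ) (hn : 1 ≤ n) (hk : 1 ≤ k) :
    (⌈harmonicR n * (k : ℝ)⌉ : ℤ) ≤ (coverNumber n k : ℤ) :=
  lp_lower_bound_general n k
end

section
/- Let n ≥ 1 and let c ∈ ℝ^n with c_i > 1 for some index i. Then the hyperplane h = {x ∈ ℝ^n : ∑_{i=1}^n c_i x_i = 1} has weight w(h) ≤ 1 − 1/n. -/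
open scoped Classical in
/-- The Clifton–Huang weight of the hyperplane `{x : ∑ i, c i * x i = 1}`:
the sum over nonempty subsets `S ⊆ [n]` with `∑_{i ∈ S} c i = 1` of
`1 / (|S| * binom(n, |S|))`. -/
noncomputable def hyperplaneWeight {n : ℕ} (c : Fin n → ℝ) : ℝ :=
  ∑ S : Finset (Fin n),
    if S.Nonempty ∧ ∑ i ∈ S, c i = 1 then
      1 / (S.card * (n.choose S.card)) else 0

/-!
Write `w(h) = ∑_S (|S| - 1)! (n - |S|)! / n!`, the sum over the nonempty `S` with
`∑_{i ∈ S} c_i = 1`. Call an arrangement of `S` canonical if its prefix of each length `j` sums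
to at most `j / |S|` of the total. By the cycle lemma every arrangement of `S` has a canonical
rotation, so `S` has at least `(|S| - 1)!` canonical arrangements, and at least
`(|S| - 1)! (n - |S|)!` arrangements of `[n]` begin with one of them. A canonical arrangement of
sum `1` has no proper prefix of sum `1`, so these sets of arrangements of `[n]` are disjoint for
distinct `S`, and none of them begins with an index `i` with `c_i > 1`, since the first entry of a
canonical arrangement of sum `1` is at most `1`. The numerators therefore add up to at most
`n! - (n - 1)!`.
-/

open Finset
open scoped Nat

def PrefixSumsLeMean (x : List ℝ) : Prop :=
  ∀ j ≤ x.length, (x.take j).sum * x.length ≤ j * x.sum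

theorem take_rotate_eq_take_drop_append_self {α : Type*} {l : List α} {r j : ℕ}
    (hr : r ≤ l.length) (hj : j ≤ l.length) :
    (l.rotate r).take j = ((l ++ l).drop r).take j := by
  rw [List.rotate_eq_drop_append_take hr, List.drop_append_of_le_length hr, List.take_append,
    List.take_append, List.take_take, List.length_drop, min_eq_left (by omega)]

theorem exists_rotate_prefixSumsLeMean {l : List ℝ} (hl : l ≠ []) :
    ∃ r < l.length, PrefixSumsLeMean (l.rotate r) := by
  -- Rotating to a maximiser of the discrepancy `P`, which is periodic along `l ++ l`, works.
  set A : ℕ → ℝ := fun k => ((l ++ l).take k).sum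
  set P : ℕ → ℝ := fun k => A k * l.length - k * l.sum
  have hP_periodic : ∀ m ≤ l.length, P (l.length + m) = P m := by
    intro m hm
    simp only [P, A, List.take_add, List.take_left, List.drop_left,
      List.take_append_of_le_length hm, List.sum_append]
    push_cast
    ring
  obtain ⟨r, hr, hmax⟩ :=
    (range l.length).exists_max_image P ⟨0, mem_range.2 (List.length_pos_iff.2 hl)⟩
  rw [mem_range] at hr
  have hP_le : ∀ j ≤ l.length, P (r + j) ≤ P r := by
    intro j hj
    rcases lt_or_ge (r + j) l.length with h | h
    · exact hmax _ (mem_range.2 h)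
    · obtain ⟨m, hm⟩ : ∃ m, r + j = l.length + m := ⟨r + j - l.length, by omega⟩
      rw [hm, hP_periodic m (by omega)]
      exact hmax m (mem_range.2 (by omega))
  refine ⟨r, hr, fun j hj => ?_⟩
  rw [List.length_rotate] at hj ⊢
  have hsum : ((l.rotate r).take j).sum = A (r + j) - A r := by
    simp only [A, take_rotate_eq_take_drop_append_self hr.le hj, List.take_add, List.sum_append]
    ring
  have := hP_le j hj
  simp only [P] at this
  rw [(List.rotate_perm l r).sum_eq, hsum]
  push_cast at this
  linarith

theorem head_le_sum_of_prefixSumsLeMean {a : ℝ} {x : List ℝ}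
    (h : PrefixSumsLeMean (a :: x)) (hsum : 0 ≤ (a :: x).sum) : a ≤ (a :: x).sum := by
  have h1 := h 1 (by simp)
  simp only [List.take_succ_cons, List.take_zero, List.sum_singleton, List.length_cons,
    Nat.cast_one, one_mul] at h1
  push_cast at h1
  nlinarith [x.length.cast_nonneg (α := ℝ)]

theorem eq_of_prefix_of_prefixSumsLeMean {x y : List ℝ} (hxy : x <+: y) (hy : PrefixSumsLeMean y)
    (hsum : x.sum = y.sum) (hpos : 0 < y.sum) : x = y := by
  refine hxy.eq_of_length (le_antisymm hxy.length_le ?_)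
  have h := hy x.length hxy.length_le
  rw [← List.prefix_iff_eq_take.1 hxy, hsum, mul_comm y.sum] at h
  exact_mod_cast le_of_mul_le_mul_right h hpos

section Arrangements

variable {α : Type*} [DecidableEq α]

noncomputable def arrangements (S : Finset α) : Finset (List α) :=
  S.toList.permutations.toFinset

theorem mem_arrangements {S : Finset α} {l : List α} :
    l ∈ arrangements S ↔ l.Nodup ∧ l.toFinset = S := by
  rw [arrangements, List.mem_toFinset, List.mem_permutations]
  refine ⟨fun h => ⟨h.nodup_iff.2 S.nodup_toList, by rw [List.toFinset_eq_of_perm _ _ h,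
    toList_toFinset]⟩, fun ⟨hl, hS⟩ => ?_⟩
  exact List.perm_of_nodup_nodup_toFinset_eq hl S.nodup_toList (by rw [hS, toList_toFinset])

theorem card_arrangements (S : Finset α) : #(arrangements S) = (#S)! := by
  rw [arrangements, List.toFinset_card_of_nodup (List.nodup_permutations _ S.nodup_toList),
    List.length_permutations, length_toList]

theorem length_of_mem_arrangements {S : Finset α} {l : List α} (h : l ∈ arrangements S) :
    l.length = #S := by
  obtain ⟨hl, rfl⟩ := mem_arrangements.1 h
  exact (List.toFinset_card_of_nodup hl).symm

theorem sum_map_of_mem_arrangements {M : Type*} [AddCommMonoid M] {S : Finset α} {l : List α}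
    (h : l ∈ arrangements S) (c : α → M) : (l.map c).sum = ∑ i ∈ S, c i := by
  obtain ⟨hl, rfl⟩ := mem_arrangements.1 h
  exact (List.sum_toFinset c hl).symm

theorem rotate_mem_arrangements {S : Finset α} {l : List α} (h : l ∈ arrangements S) (r : ℕ) :
    l.rotate r ∈ arrangements S := by
  obtain ⟨hl, rfl⟩ := mem_arrangements.1 h
  exact mem_arrangements.2
    ⟨List.nodup_rotate.2 hl, List.toFinset_eq_of_perm _ _ (l.rotate_perm r)⟩

open scoped Classical in
noncomputable def canonicalArrangements (c : α → ℝ) (S : Finset α) : Finset (List α) :=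
  (arrangements S).filter fun l => PrefixSumsLeMean (l.map c)

theorem factorial_le_card_canonicalArrangements (c : α → ℝ) {S : Finset α} (hS : S.Nonempty) :
    (#S - 1)! ≤ #(canonicalArrangements c S) := by
  have hcover : arrangements S ⊆ (canonicalArrangements c S).biUnion
      fun b => (range #S).image b.rotate := by
    intro l hl
    have hlen := length_of_mem_arrangements hl
    obtain ⟨r, hr, hcan⟩ := exists_rotate_prefixSumsLeMean (l := l.map c)
      (by simpa [← List.length_pos_iff, hlen] using hS)
    rw [List.length_map] at hr
    rw [← List.map_rotate] at hcan
    refine mem_biUnion.2 ⟨l.rotate r, by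
      classical exact mem_filter.2 ⟨rotate_mem_arrangements hl r, hcan⟩,
      mem_image.2 ⟨(#S - r) % #S, mem_range.2 (Nat.mod_lt _ hS.card_pos), ?_⟩⟩
    rw [← hlen, List.rotate_rotate, ← List.rotate_mod, Nat.add_mod_mod,
      Nat.add_sub_cancel' hr.le, Nat.mod_self, List.rotate_zero]
  have := (card_le_card hcover).trans (card_biUnion_le_card_mul _ _ #S fun b _ =>
    card_image_le.trans (card_range _).le)
  rw [card_arrangements, ← Nat.mul_factorial_pred hS.card_pos.ne', mul_comm] at this
  exact Nat.le_of_mul_le_mul_right this hS.card_pos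

end Arrangements

section Counting

variable {α : Type*} [DecidableEq α] [Fintype α] (c : α → ℝ)

theorem append_mem_arrangements_univ {S : Finset α} {l m : List α} (hl : l ∈ arrangements S)
    (hm : m ∈ arrangements Sᶜ) : l ++ m ∈ arrangements univ := by
  obtain ⟨hl_nodup, rfl⟩ := mem_arrangements.1 hl
  obtain ⟨hm_nodup, hmS⟩ := mem_arrangements.1 hm
  refine mem_arrangements.2 ⟨List.nodup_append.2 ⟨hl_nodup, hm_nodup, ?_⟩, by
    rw [List.toFinset_append, hmS, union_compl]⟩
  rintro a ha b hb rfl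
  have : a ∈ m.toFinset := List.mem_toFinset.2 hb
  simp_all

theorem cons_mem_arrangements_univ {i : α} {m : List α} (hm : m ∈ arrangements (univ.erase i)) :
    i :: m ∈ arrangements univ := by
  obtain ⟨hm_nodup, hmS⟩ := mem_arrangements.1 hm
  refine mem_arrangements.2 ⟨hm_nodup.cons ?_, ?_⟩
  · simpa using congrArg (i ∈ ·) hmS
  · rw [List.toFinset_cons, hmS, insert_erase (mem_univ i)]

open scoped Classical in
noncomputable def unitSumSets : Finset (Finset α) :=
  univ.filter fun S => S.Nonempty ∧ ∑ i ∈ S, c i = 1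

noncomputable def arrangementsWithCanonicalPrefix (S : Finset α) : Finset (List α) :=
  (canonicalArrangements c S ×ˢ arrangements Sᶜ).image fun p => p.1 ++ p.2

theorem card_arrangementsWithCanonicalPrefix (S : Finset α) :
    #(arrangementsWithCanonicalPrefix c S) =
      #(canonicalArrangements c S) * (Fintype.card α - #S)! := by
  rw [arrangementsWithCanonicalPrefix, card_image_of_injOn, card_product, card_arrangements,
    card_compl]
  rintro ⟨l, m⟩ hlm ⟨l', m'⟩ hlm' h
  simp only [coe_product, Set.mem_prod, mem_coe, canonicalArrangements, mem_filter] at hlm hlm'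
  obtain ⟨rfl, rfl⟩ := List.append_inj h ((length_of_mem_arrangements hlm.1.1).trans
    (length_of_mem_arrangements hlm'.1.1).symm)
  rfl

theorem exists_of_mem_arrangementsWithCanonicalPrefix {S : Finset α} {z : List α}
    (hz : z ∈ arrangementsWithCanonicalPrefix c S) :
    ∃ l ∈ arrangements S, PrefixSumsLeMean (l.map c) ∧ l <+: z := by
  obtain ⟨⟨l, m⟩, hlm, rfl⟩ := mem_image.1 hz
  simp only [mem_product, canonicalArrangements, mem_filter] at hlm
  exact ⟨l, hlm.1.1, hlm.1.2, List.prefix_append l m⟩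

theorem arrangementsWithCanonicalPrefix_subset (S : Finset α) :
    arrangementsWithCanonicalPrefix c S ⊆ arrangements univ := by
  rintro _ hz
  obtain ⟨⟨l, m⟩, hlm, rfl⟩ := mem_image.1 hz
  simp only [mem_product, canonicalArrangements, mem_filter] at hlm
  exact append_mem_arrangements_univ hlm.1.1 hlm.2

theorem sum_map_eq_one_of_mem_arrangements {S : Finset α} (hS : S ∈ unitSumSets c) {l : List α}
    (hl : l ∈ arrangements S) : (l.map c).sum = 1 := by
  classical
  rw [sum_map_of_mem_arrangements hl]
  exact (mem_filter.1 hS).2.2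

theorem eq_of_mem_arrangementsWithCanonicalPrefix {S T : Finset α} (hS : S ∈ unitSumSets c)
    (hT : T ∈ unitSumSets c) {z : List α} (hzS : z ∈ arrangementsWithCanonicalPrefix c S)
    (hzT : z ∈ arrangementsWithCanonicalPrefix c T) : S = T := by
  obtain ⟨l, hl, hl_can, hlz⟩ := exists_of_mem_arrangementsWithCanonicalPrefix c hzS
  obtain ⟨l', hl', hl'_can, hl'z⟩ := exists_of_mem_arrangementsWithCanonicalPrefix c hzT
  have key : ∀ {x y : List α}, x <+: y → (x.map c).sum = 1 → (y.map c).sum = 1 →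
      PrefixSumsLeMean (y.map c) → x = y := fun hxy hx hy hcan =>
    hxy.eq_of_length <| by
      simpa using congrArg List.length <|
        eq_of_prefix_of_prefixSumsLeMean (hxy.map c) hcan (hx.trans hy.symm) (hy ▸ one_pos)
  have hl_sum := sum_map_eq_one_of_mem_arrangements c hS hl
  have hl'_sum := sum_map_eq_one_of_mem_arrangements c hT hl'
  obtain rfl : l = l' := (List.prefix_or_prefix_of_prefix hlz hl'z).elim
    (fun h => key h hl_sum hl'_sum hl'_can) (fun h => (key h hl'_sum hl_sum hl_can).symm)
  rw [← (mem_arrangements.1 hl).2, (mem_arrangements.1 hl').2]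

theorem head?_ne_of_mem_arrangementsWithCanonicalPrefix {i : α} (hi : 1 < c i) {S : Finset α}
    (hS : S ∈ unitSumSets c) {z : List α} (hz : z ∈ arrangementsWithCanonicalPrefix c S) :
    z.head? ≠ some i := by
  classical
  obtain ⟨l, hl, hl_can, ⟨w, rfl⟩⟩ := exists_of_mem_arrangementsWithCanonicalPrefix c hz
  have hl_sum := sum_map_eq_one_of_mem_arrangements c hS hl
  obtain ⟨a, x, rfl⟩ := List.exists_cons_of_ne_nil (l := l) (by rintro rfl; simp at hl_sum)
  rw [List.map_cons] at hl_can hl_sum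
  have := head_le_sum_of_prefixSumsLeMean hl_can (hl_sum ▸ zero_le_one)
  rintro ⟨⟩
  linarith

theorem sum_factorial_mul_factorial_add_factorial_le {i : α} (hi : 1 < c i) :
    ∑ S ∈ unitSumSets c, (#S - 1)! * (Fintype.card α - #S)! + (Fintype.card α - 1)! ≤
      (Fintype.card α)! := by
  classical
  set U := (unitSumSets c).biUnion (arrangementsWithCanonicalPrefix c)
  set I := (arrangements (univ.erase i)).image (List.cons i)
  have hU_disj : (unitSumSets c : Set (Finset α)).PairwiseDisjoint
      (arrangementsWithCanonicalPrefix c) := fun S hS T hT hST =>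
    disjoint_left.2 fun _ hzS hzT => hST (eq_of_mem_arrangementsWithCanonicalPrefix c hS hT hzS hzT)
  have hUI_disj : Disjoint U I := by
    refine disjoint_left.2 fun _ hzU hzI => ?_
    obtain ⟨S, hS, hz⟩ := mem_biUnion.1 hzU
    obtain ⟨m, -, rfl⟩ := mem_image.1 hzI
    exact head?_ne_of_mem_arrangementsWithCanonicalPrefix c hi hS hz rfl
  have hUI_sub : U ∪ I ⊆ arrangements univ := by
    refine union_subset (biUnion_subset.2 fun S _ => arrangementsWithCanonicalPrefix_subset c S) ?_
    exact image_subset_iff.2 fun m hm => cons_mem_arrangements_univ hm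
  calc ∑ S ∈ unitSumSets c, (#S - 1)! * (Fintype.card α - #S)! + (Fintype.card α - 1)!
      ≤ ∑ S ∈ unitSumSets c, #(arrangementsWithCanonicalPrefix c S) + #I := by
        gcongr with S hS
        · rw [card_arrangementsWithCanonicalPrefix]
          exact Nat.mul_le_mul_right _ <|
            factorial_le_card_canonicalArrangements c (mem_filter.1 hS).2.1
        · rw [card_image_of_injective _ List.cons_injective, card_arrangements,
            card_erase_of_mem (mem_univ i), card_univ]
    _ = #(U ∪ I) := by rw [card_union_of_disjoint hUI_disj, card_biUnion hU_disj]
    _ ≤ #(arrangements univ) := card_le_card hUI_sub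
    _ = (Fintype.card α)! := by rw [card_arrangements, card_univ]

end Counting

theorem one_div_mul_choose_eq {n k : ℕ} (hk : k ≠ 0) (hkn : k ≤ n) :
    1 / ((k : ℝ) * n.choose k) = ((k - 1)! * (n - k)! : ℕ) / (n ! : ℝ) := by
  have h : k * n.choose k * ((k - 1)! * (n - k)!) = n ! := by
    rw [← Nat.choose_mul_factorial_mul_factorial hkn, ← Nat.mul_factorial_pred hk]
    ring
  have hk' : (k : ℝ) ≠ 0 := Nat.cast_ne_zero.2 hk
  have hc : (n.choose k : ℝ) ≠ 0 := Nat.cast_ne_zero.2 (Nat.choose_pos hkn).ne'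
  rw [div_eq_div_iff (mul_ne_zero hk' hc) (Nat.cast_ne_zero.2 n.factorial_ne_zero), ← h]
  push_cast
  ring

theorem hyperplaneWeight_eq_sum_div {n : ℕ} (c : Fin n → ℝ) :
    hyperplaneWeight c = (∑ S ∈ unitSumSets c, (#S - 1)! * (n - #S)! : ℕ) / (n ! : ℝ) := by
  rw [hyperplaneWeight, unitSumSets, sum_filter, Nat.cast_sum, sum_div]
  refine sum_congr rfl fun S _ => ?_
  split_ifs with hS
  · exact one_div_mul_choose_eq hS.1.card_pos.ne' (card_le_univ S |>.trans_eq (Fintype.card_fin n))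
  · simp

theorem weight_le_of_large_coefficient_general (n : ℕ) (c : Fin n → ℝ)
    (h : ∃ i, 1 < c i) :
    hyperplaneWeight c ≤ 1 - 1 / n := by
  obtain ⟨i, hi⟩ := h
  have hcount := sum_factorial_mul_factorial_add_factorial_le c hi
  rw [Fintype.card_fin] at hcount
  have hn : (n : ℝ) ≠ 0 := Nat.cast_ne_zero.2 i.pos.ne'
  have hn_fact : (n : ℝ) * (n - 1)! = n ! := by exact_mod_cast Nat.mul_factorial_pred i.pos.ne'
  rw [hyperplaneWeight_eq_sum_div, div_le_iff₀ (by positivity)]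
  calc ((∑ S ∈ unitSumSets c, (#S - 1)! * (n - #S)! : ℕ) : ℝ)
      ≤ (n ! : ℝ) - (n - 1)! := le_sub_iff_add_le.2 (by exact_mod_cast hcount)
    _ = (1 - 1 / n) * n ! := by rw [← hn_fact]; field_simp

theorem weight_le_of_large_coefficient (n : ℕ) (hn : 1 ≤ n) (c : Fin n → ℝ)
    (h : ∃ i, 1 < c i) :
    hyperplaneWeight c ≤ 1 - 1 / n :=
  weight_le_of_large_coefficient_general n c h
end

section
/- Let n ≥ 1 and let c ∈ ℝ^n with ∑_{i=1}^n c_i < 1. Then the hyperplane h = {x ∈ ℝ^n : ∑_{i=1}^n c_i x_i = 1} has weight w(h) ≤ 1 − 1/n. -/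
open Finset Nat

theorem Nat.exists_least_argmax {β : Type*} [LinearOrder β] (f : ℕ → β) {n : ℕ} (hn : 0 < n) :
    ∃ m < n, (∀ j < n, f j ≤ f m) ∧ ∀ j < m, f j < f m := by
  classical
  have hmax : ∃ m, m < n ∧ ∀ j < n, f j ≤ f m := by
    obtain ⟨m, hm, hmax⟩ := (Finset.range n).exists_max_image f (by simpa using hn.ne')
    exact ⟨m, Finset.mem_range.1 hm, fun j hj => hmax j (Finset.mem_range.2 hj)⟩
  obtain ⟨hlt, hle⟩ := Nat.find_spec hmax
  refine ⟨Nat.find hmax, hlt, hle, fun j hj => ?_⟩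
  obtain ⟨i, hi, hji⟩ : ∃ i < n, f j < f i := by
    simpa [hj.trans hlt] using Nat.find_min hmax hj
  exact hji.trans_le (hle i hi)

theorem Finset.card_le_card_mul_card_filter_of_forall_exists {α κ : Type*} {s : Finset α}
    {K : Finset κ} {f : κ → α → α} {p : α → Prop} [DecidablePred p]
    (hmaps : ∀ k ∈ K, Set.MapsTo (f k) s s) (hinj : ∀ k ∈ K, Set.InjOn (f k) s)
    (hcover : ∀ x ∈ s, ∃ k ∈ K, p (f k x)) : #s ≤ #K * #(s.filter p) := by
  simpa using card_mul_le_card_mul (fun x k => p (f k x)) (m := 1)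
    (fun x hx => by
      obtain ⟨k, hk, hpk⟩ := hcover x hx
      exact card_pos.2 ⟨k, mem_filter.2 ⟨hk, hpk⟩⟩)
    (fun k hk => card_le_card_of_injOn (f k)
      (fun x hx => by
        obtain ⟨hxs, hpx⟩ := mem_filter.1 hx
        exact mem_filter.2 ⟨hmaps k hk hxs, hpx⟩)
      ((hinj k hk).mono fun x hx => (mem_filter.1 hx).1))

def PrefixSumsLtOne (l : List ℝ) : Prop :=
  ∀ k < l.length, (l.take k).sum < 1

noncomputable instance : DecidablePred PrefixSumsLtOne := fun l =>
  inferInstanceAs (Decidable (∀ k < l.length, (l.take k).sum < 1))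

theorem PrefixSumsLtOne.sum_lt_of_isPrefix {l₁ l₂ : List ℝ} (h : PrefixSumsLtOne l₂)
    (hp : l₁ <+: l₂) (hlt : l₁.length < l₂.length) : l₁.sum < 1 := by
  rw [List.prefix_iff_eq_take.1 hp]
  exact h _ hlt

/-- The cycle lemma: rotating so as to start right after the first maximal prefix sum. -/
theorem List.exists_rotate_prefixSumsLtOne {l : List ℝ} (hl : l ≠ []) (hsum : l.sum ≤ 1) :
    ∃ k < l.length, PrefixSumsLtOne (l.rotate k) := by
  obtain ⟨m, hm, hle, hlt⟩ :=
    Nat.exists_least_argmax (fun j => (l.take j).sum) (List.length_pos_iff.2 hl)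
  refine ⟨m, hm, fun j hj => ?_⟩
  rw [List.length_rotate] at hj
  have hsplit : l.sum = (l.take m).sum + (l.drop m).sum := by
    rw [← List.sum_append, List.take_append_drop]
  rw [List.rotate_eq_drop_append_take hm.le, List.take_append, List.sum_append,
    List.length_drop]
  rcases le_or_gt j (l.length - m) with hinside | hwrap
  · have hpre : (l.take (m + j)).sum = (l.take m).sum + ((l.drop m).take j).sum := by
      rw [List.take_add, List.sum_append]
    rw [Nat.sub_eq_zero_of_le hinside, List.take_zero, List.sum_nil, add_zero]
    rcases lt_or_eq_of_le (show m + j ≤ l.length by omega) with hmj | hmj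
    · linarith [hle (m + j) hmj]
    · have h0 : (l.take 0).sum < (l.take m).sum := hlt 0 (by omega)
      rw [hmj, List.take_length] at hpre
      simp only [List.take_zero, List.sum_nil] at h0
      linarith
  · rw [List.take_of_length_le (by simp; omega), List.take_take, min_eq_left (by omega)]
    linarith [hlt (j - (l.length - m)) (by omega)]

namespace Finset

variable {α : Type*} [DecidableEq α]

noncomputable def orderings (S : Finset α) : Finset (List α) :=
  S.toList.permutations.toFinset

theorem mem_orderings {S : Finset α} {l : List α} : l ∈ S.orderings ↔ l.Perm S.toList := by
  rw [orderings, List.mem_toFinset, List.mem_permutations]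

theorem card_orderings (S : Finset α) : #S.orderings = (#S)! := by
  rw [orderings, List.toFinset_card_of_nodup (List.nodup_permutations _ S.nodup_toList),
    List.length_permutations, length_toList]

theorem length_of_mem_orderings {S : Finset α} {l : List α} (hl : l ∈ S.orderings) :
    l.length = #S := by
  rw [(mem_orderings.1 hl).length_eq, length_toList]

theorem sum_map_of_mem_orderings {S : Finset α} {l : List α} (hl : l ∈ S.orderings)
    (c : α → ℝ) : (l.map c).sum = ∑ i ∈ S, c i := by
  rw [((mem_orderings.1 hl).map c).sum_eq, sum_map_toList]

theorem toFinset_of_mem_orderings {S : Finset α} {l : List α} (hl : l ∈ S.orderings) :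
    l.toFinset = S := by
  rw [List.toFinset_eq_of_perm _ _ (mem_orderings.1 hl), toList_toFinset]

theorem append_mem_orderings_univ [Fintype α] {S : Finset α} {a b : List α}
    (ha : a ∈ S.orderings) (hb : b ∈ Sᶜ.orderings) : a ++ b ∈ (univ : Finset α).orderings := by
  rw [mem_orderings] at *
  refine (ha.append hb).trans ((List.perm_ext_iff_of_nodup ?_ (nodup_toList _)).2 fun x => by
    simp [em])
  exact List.nodup_append.2 ⟨S.nodup_toList, Sᶜ.nodup_toList, by
    simp only [mem_toList, mem_compl]
    rintro x hx _ hy rfl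
    exact hy hx⟩

noncomputable def lowPrefixOrderings (c : α → ℝ) (S : Finset α) : Finset (List α) :=
  S.orderings.filter fun a => PrefixSumsLtOne (a.map c)

theorem factorial_card_le_card_mul_card_lowPrefixOrderings (c : α → ℝ) {S : Finset α}
    (hS : S.Nonempty) (hsum : ∑ i ∈ S, c i ≤ 1) :
    (#S)! ≤ #S * #(S.lowPrefixOrderings c) := by
  rw [← card_orderings, ← card_range #S]
  refine card_le_card_mul_card_filter_of_forall_exists (f := fun k a => a.rotate k)
    (fun k _ a ha => mem_orderings.2 ((List.rotate_perm a k).trans (mem_orderings.1 ha)))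
    (fun k _ _ _ _ _ h => List.rotate_injective k h) fun a ha => ?_
  have hlen : (a.map c).length = #S := by rw [List.length_map, length_of_mem_orderings ha]
  obtain ⟨k, hk, hgood⟩ := List.exists_rotate_prefixSumsLtOne
    (List.ne_nil_of_length_pos (hlen ▸ hS.card_pos)) (sum_map_of_mem_orderings ha c ▸ hsum)
  exact ⟨k, mem_range.2 (hlen ▸ hk), by rwa [← List.map_rotate] at hgood⟩

theorem one_div_card_mul_choose_le [Fintype α] (c : α → ℝ) {S : Finset α}
    (hS : S.Nonempty) (hsum : ∑ i ∈ S, c i ≤ 1) :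
    1 / (#S * (Fintype.card α).choose #S : ℝ) ≤
      #(S.lowPrefixOrderings c ×ˢ Sᶜ.orderings) / (Fintype.card α)! := by
  have hcount : ((#S)! : ℝ) ≤ #S * #(S.lowPrefixOrderings c) := by
    exact_mod_cast factorial_card_le_card_mul_card_lowPrefixOrderings c hS hsum
  rw [Nat.cast_choose ℝ (card_le_univ S), card_product, card_orderings, card_compl]
  push_cast
  rw [div_le_div_iff₀ (by positivity) (by positivity)]
  field_simp
  linarith

theorem length_le_of_isPrefix_of_mem_lowPrefixOrderings (c : α → ℝ) {S₁ S₂ : Finset α}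
    (hnest : S₁ ⊂ S₂ → 1 ≤ ∑ i ∈ S₁, c i) {a₁ a₂ : List α}
    (ha₁ : a₁ ∈ S₁.lowPrefixOrderings c) (ha₂ : a₂ ∈ S₂.lowPrefixOrderings c) (hp : a₁ <+: a₂) :
    a₂.length ≤ a₁.length := by
  rw [lowPrefixOrderings, mem_filter] at ha₁ ha₂
  by_contra! hlt
  have hsub : S₁ ⊆ S₂ := fun x hx => by
    rw [← toFinset_of_mem_orderings ha₁.1, List.mem_toFinset] at hx
    rw [← toFinset_of_mem_orderings ha₂.1, List.mem_toFinset]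
    exact hp.subset hx
  have hne : S₁ ≠ S₂ := by
    rintro rfl
    rw [length_of_mem_orderings ha₁.1, length_of_mem_orderings ha₂.1] at hlt
    exact hlt.false
  have hsum := hnest (ssubset_iff_subset_ne.2 ⟨hsub, hne⟩)
  rw [← sum_map_of_mem_orderings ha₁.1] at hsum
  exact (ha₂.2.sum_lt_of_isPrefix (hp.map c) (by simpa using hlt)).not_ge hsum

theorem injOn_append_sigma [Fintype α] (c : α → ℝ) {𝒮 : Finset (Finset α)}
    (hnest : ∀ S₁ ∈ 𝒮, ∀ S₂ ∈ 𝒮, S₁ ⊂ S₂ → 1 ≤ ∑ i ∈ S₁, c i) :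
    Set.InjOn (fun q : Σ _ : Finset α, List α × List α => q.2.1 ++ q.2.2)
      (𝒮.sigma fun S => S.lowPrefixOrderings c ×ˢ Sᶜ.orderings) := by
  rintro ⟨S₁, a₁, b₁⟩ h₁ ⟨S₂, a₂, b₂⟩ h₂ (heq : a₁ ++ b₁ = a₂ ++ b₂)
  simp only [coe_sigma, Set.mem_sigma_iff, mem_coe, mem_product] at h₁ h₂
  obtain ⟨hS₁, ha₁, -⟩ := h₁
  obtain ⟨hS₂, ha₂, -⟩ := h₂
  have hp₁ : a₁ <+: a₂ ++ b₂ := heq ▸ List.prefix_append a₁ b₁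
  have hp₂ : a₂ <+: a₂ ++ b₂ := List.prefix_append a₂ b₂
  have hlen : a₁.length = a₂.length := by
    rcases le_total a₁.length a₂.length with h | h
    · exact h.antisymm (length_le_of_isPrefix_of_mem_lowPrefixOrderings c
        (hnest S₁ hS₁ S₂ hS₂) ha₁ ha₂ (List.prefix_of_prefix_length_le hp₁ hp₂ h))
    · exact (length_le_of_isPrefix_of_mem_lowPrefixOrderings c
        (hnest S₂ hS₂ S₁ hS₁) ha₂ ha₁ (List.prefix_of_prefix_length_le hp₂ hp₁ h)).antisymm h
  obtain ⟨rfl, rfl⟩ := List.append_inj heq hlen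
  obtain rfl : S₁ = S₂ := (toFinset_of_mem_orderings (mem_filter.1 ha₁).1).symm.trans
    (toFinset_of_mem_orderings (mem_filter.1 ha₂).1)
  rfl

theorem sum_one_div_card_mul_choose_le_one [Fintype α] (c : α → ℝ) {𝒮 : Finset (Finset α)}
    (hne : ∀ S ∈ 𝒮, S.Nonempty) (hle : ∀ S ∈ 𝒮, ∑ i ∈ S, c i ≤ 1)
    (hnest : ∀ S₁ ∈ 𝒮, ∀ S₂ ∈ 𝒮, S₁ ⊂ S₂ → 1 ≤ ∑ i ∈ S₁, c i) :
    ∑ S ∈ 𝒮, 1 / (#S * (Fintype.card α).choose #S : ℝ) ≤ 1 := by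
  have hcard : #(𝒮.sigma fun S => S.lowPrefixOrderings c ×ˢ Sᶜ.orderings) ≤
      (Fintype.card α)! := by
    rw [← card_univ, ← card_orderings]
    refine card_le_card_of_injOn _ (fun q hq => ?_) (injOn_append_sigma c hnest)
    simp only [coe_sigma, Set.mem_sigma_iff, mem_coe, mem_product, lowPrefixOrderings,
      mem_filter] at hq
    exact append_mem_orderings_univ hq.2.1.1 hq.2.2
  calc ∑ S ∈ 𝒮, 1 / (#S * (Fintype.card α).choose #S : ℝ)
      ≤ ∑ S ∈ 𝒮, (#(S.lowPrefixOrderings c ×ˢ Sᶜ.orderings) : ℝ) / (Fintype.card α)! :=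
        sum_le_sum fun S hS => one_div_card_mul_choose_le c (hne S hS) (hle S hS)
    _ = #(𝒮.sigma fun S => S.lowPrefixOrderings c ×ˢ Sᶜ.orderings) / (Fintype.card α)! := by
        rw [← sum_div, card_sigma]
        push_cast
        rfl
    _ ≤ 1 := div_le_one_of_le₀ (by exact_mod_cast hcard) (by positivity)

end Finset

theorem weight_le_of_small_sum (n : ℕ) (hn : 1 ≤ n) (c : Fin n → ℝ)
    (h : ∑ i, c i < 1) :
    hyperplaneWeight c ≤ 1 - 1 / n := by
  classical
  set 𝒢 := (univ : Finset (Finset (Fin n))).filter fun S => S.Nonempty ∧ ∑ i ∈ S, c i = 1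
  have hweight : hyperplaneWeight c = ∑ S ∈ 𝒢, 1 / (#S * n.choose #S : ℝ) := by
    rw [hyperplaneWeight, sum_filter]
  have huniv : univ ∉ 𝒢 := fun hmem => h.ne (mem_filter.1 hmem).2.2
  have hbound := sum_one_div_card_mul_choose_le_one c (𝒮 := insert univ 𝒢)
    (forall_mem_insert _ _ _ |>.2 ⟨⟨⟨0, hn⟩, mem_univ _⟩, fun S hS => (mem_filter.1 hS).2.1⟩)
    (forall_mem_insert _ _ _ |>.2 ⟨h.le, fun S hS => (mem_filter.1 hS).2.2.le⟩)
    (fun S₁ hS₁ S₂ _ hss => by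
      rcases mem_insert.1 hS₁ with rfl | hS₁
      · exact absurd (hss.trans_subset (subset_univ S₂)) (lt_irrefl _)
      · exact (mem_filter.1 hS₁).2.2.ge)
  rw [sum_insert huniv, Finset.card_univ, Fintype.card_fin, Nat.choose_self, Nat.cast_one,
    mul_one] at hbound
  rw [hweight]
  linarith
end
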